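/- arXiv:1107.5537 — 5 statements merged into one kernel-verified Lean document; each statement's English description precedes it below -/
import Mathlib

section
/- Let (a_i) be a sequence in [0,1] with limsup_{n→∞} (1/n) ∑_{i=1}^n a_i = ε > 0, and define the indicator sequence α_i = 1 if a_i ≥ ε/4 and α_i = 0 otherwise. Then the infinite product ∏_{i=1}^∞ (1 − α_i/i) = 0. -/
open Filter Finset

/-!
Since `a i ≤ α i + ε / 4`, the indicators `α i` have upper density at least `ε / 4`.
Positive upper density forces `∑ α i / i = ∞`: whenever `∑_{i ≤ n} α i > ε n / 4` with
`n ≥ 8 N / ε`, the block `(N, n]` alone contributes at least `ε / 8` to that sum.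
Finally `∏ (1 - x i) ≤ exp (-∑ x i)`.
-/

theorem prod_one_sub_le_exp_neg_sum {ι : Type*} (s : Finset ι) (x : ι → ℝ)
    (hx : ∀ i ∈ s, x i ≤ 1) : ∏ i ∈ s, (1 - x i) ≤ Real.exp (-∑ i ∈ s, x i) := by
  rw [← sum_neg_distrib, Real.exp_sum]
  exact prod_le_prod (fun i hi => sub_nonneg.2 (hx i hi)) fun i _ => Real.one_sub_le_exp_neg _

theorem tendsto_prod_one_sub_of_tendsto_sum {ι β : Type*} {l : Filter β} (s : β → Finset ι)
    (x : ι → ℝ) (hx : ∀ i, x i ≤ 1) (hsum : Tendsto (fun N => ∑ i ∈ s N, x i) l atTop) :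
    Tendsto (fun N => ∏ i ∈ s N, (1 - x i)) l (nhds 0) :=
  tendsto_of_tendsto_of_tendsto_of_le_of_le tendsto_const_nhds
    (Real.tendsto_exp_atBot.comp (tendsto_neg_atTop_atBot.comp hsum))
    (fun _ => prod_nonneg fun i _ => sub_nonneg.2 (hx i))
    (fun N => prod_one_sub_le_exp_neg_sum (s N) x fun i _ => hx i)

theorem tendsto_atTop_of_monotone_of_exists_add_le {S : ℕ → ℝ} (hS : Monotone S) {δ : ℝ}
    (hδ : 0 < δ) (hstep : ∀ N, ∃ n, S N + δ ≤ S n) : Tendsto S atTop atTop := by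
  have hgrow : ∀ k : ℕ, ∃ N, S 0 + k * δ ≤ S N := by
    intro k
    induction k with
    | zero => exact ⟨0, by simp⟩
    | succ k ih =>
      obtain ⟨N, hN⟩ := ih
      obtain ⟨n, hn⟩ := hstep N
      exact ⟨n, by push_cast; linarith⟩
  refine tendsto_atTop_atTop_of_monotone hS fun K => ?_
  obtain ⟨k, hk⟩ := exists_nat_ge ((K - S 0) / δ)
  obtain ⟨N, hN⟩ := hgrow k
  exact ⟨N, by rw [div_le_iff₀ hδ] at hk; linarith⟩

theorem frequently_mul_lt_sum_Icc_of_lt_limsup (a : ℕ → ℝ) (ha : ∀ i, 0 ≤ a i) {r : ℝ}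
    (hr : r < limsup (fun n => (∑ i ∈ Icc 1 n, a i) / n) atTop) :
    ∃ᶠ n in atTop, r * n < ∑ i ∈ Icc 1 n, a i := by
  have hbdd : IsCoboundedUnder (· ≤ ·) atTop fun n => (∑ i ∈ Icc 1 n, a i) / n :=
    isCoboundedUnder_le_of_le atTop (x := 0) fun n =>
      div_nonneg (sum_nonneg fun i _ => ha i) n.cast_nonneg
  refine ((frequently_lt_of_lt_limsup hbdd hr).and_eventually (eventually_gt_atTop 0)).mono ?_
  rintro n ⟨hn, hn0⟩
  rwa [lt_div_iff₀ (by exact_mod_cast hn0)] at hn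

theorem tendsto_sum_Icc_div_atTop_of_frequently_mul_lt_sum (b : ℕ → ℝ)
    (hb : ∀ i, b i ∈ Set.Icc (0 : ℝ) 1) {c : ℝ} (hc : 0 < c)
    (hfreq : ∃ᶠ n in atTop, c * n < ∑ i ∈ Icc 1 n, b i) :
    Tendsto (fun N => ∑ i ∈ Icc 1 N, b i / i) atTop atTop := by
  refine tendsto_atTop_of_monotone_of_exists_add_le
    (fun m n hmn => sum_le_sum_of_subset_of_nonneg (Icc_subset_Icc_right hmn)
      fun i _ _ => div_nonneg (hb i).1 i.cast_nonneg) (half_pos hc) fun N => ?_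
  obtain ⟨n, hn, hmax⟩ := (hfreq.and_eventually
    (eventually_ge_atTop (max N ⌈2 * N / c⌉₊))).exists
  have hNn : N ≤ n := le_of_max_le_left hmax
  have hn_pos : (0 : ℝ) < n := by
    rcases n.eq_zero_or_pos with rfl | hn0
    · simp at hn
    · exact_mod_cast hn0
  have hN_le : (N : ℝ) ≤ c / 2 * n := by
    have := (Nat.le_ceil _).trans (Nat.cast_le.2 (le_of_max_le_right hmax))
    rw [div_le_iff₀ hc] at this
    linarith
  have hsplit (f : ℕ → ℝ) : ∑ i ∈ Icc 1 N, f i + ∑ i ∈ Ioc N n, f i = ∑ i ∈ Icc 1 n, f i :=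
    sum_Ioc_consecutive f N.zero_le hNn
  have hhead : ∑ i ∈ Icc 1 N, b i ≤ N := by
    simpa using sum_le_sum fun i (_ : i ∈ Icc 1 N) => (hb i).2
  -- On `(N, n]` every weight `1 / i` is at least `1 / n`, and at least `c n - N` of mass lies there.
  have htail : c / 2 ≤ ∑ i ∈ Ioc N n, b i / i := calc
    c / 2 ≤ (∑ i ∈ Ioc N n, b i) / n := by
      rw [le_div_iff₀ hn_pos]; linarith [hsplit b]
    _ = ∑ i ∈ Ioc N n, b i / n := sum_div _ _ _
    _ ≤ ∑ i ∈ Ioc N n, b i / i := sum_le_sum fun i hi => by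
      have hi := mem_Ioc.1 hi
      exact div_le_div_of_nonneg_left (hb i).1 (by exact_mod_cast N.zero_le.trans_lt hi.1)
        (by exact_mod_cast hi.2)
  exact ⟨n, by linarith [hsplit fun i => b i / i]⟩

theorem stmt1 (a : ℕ → ℝ) (ε : ℝ) (hε : 0 < ε)
    (hbound : ∀ i, a i ∈ Set.Icc (0 : ℝ) 1)
    (hlimsup : Filter.limsup (fun n => (∑ i ∈ Finset.Icc 1 n, a i) / n) Filter.atTop = ε)
    (α : ℕ → ℝ) (hα : ∀ i, α i = if ε / 4 ≤ a i then 1 else 0) :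
    Filter.Tendsto (fun N => ∏ i ∈ Finset.Icc 1 N, (1 - α i / i)) Filter.atTop (nhds 0) := by
  have hα_mem : ∀ i, α i ∈ Set.Icc (0 : ℝ) 1 := fun i => by
    rw [hα i]; split_ifs <;> norm_num
  have ha_le : ∀ i, a i ≤ α i + ε / 4 := fun i => by
    rw [hα i]; split_ifs with h
    · linarith [(hbound i).2]
    · linarith
  have hfreq_a := frequently_mul_lt_sum_Icc_of_lt_limsup a (fun i => (hbound i).1)
    (r := ε / 2) (by rw [hlimsup]; linarith)
  have hfreq_α : ∃ᶠ n in atTop, ε / 4 * n < ∑ i ∈ Icc 1 n, α i := hfreq_a.mono fun n hn => by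
    have : ∑ i ∈ Icc 1 n, a i ≤ ∑ i ∈ Icc 1 n, α i + n * (ε / 4) := by
      simpa [sum_add_distrib] using sum_le_sum fun i (_ : i ∈ Icc 1 n) => ha_le i
    linarith
  refine tendsto_prod_one_sub_of_tendsto_sum _ _ (fun i => ?_)
    (tendsto_sum_Icc_div_atTop_of_frequently_mul_lt_sum α hα_mem (by positivity) hfreq_α)
  rcases i.eq_zero_or_pos with rfl | hi
  · simp
  · exact div_le_one_of_le₀ ((hα_mem i).2.trans (by exact_mod_cast hi)) i.cast_nonneg
end

section
/- If (a_i) is a sequence in [0,1] with limsup_{n→∞} (1/n) ∑_{i=1}^n a_i = ε > 0, and α_i = 1 if a_i ≥ ε/4 (else 0), then ∑_{i=1}^∞ α_i/i = ∞ (the series diverges). -/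
/-!
Since `a i ≤ 1`, each `a i` is at most `α i + ε / 4`. Along the infinitely many `n` whose
Cesàro average exceeds `ε / 2`, at least `ε n / 4` of the indices `i ≤ n` therefore have
`α i = 1`. Taking such `n ≥ 8M / ε`, at least `ε n / 8` of them exceed `M`, and each
contributes at least `1 / n` to the block `∑_{M < i ≤ n} α i / i`, which is thus at least
`ε / 8`. A monotone sequence with jumps of a fixed size beyond every index is unbounded.
-/

open Filter Finset

lemma not_bddAbove_range_of_forall_exists_add_le {ι : Type*} [Nonempty ι] {T : ι → ℝ} {δ : ℝ}
    (hδ : 0 < δ) (hjump : ∀ M, ∃ n, T M + δ ≤ T n) : ¬BddAbove (Set.range T) := by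
  intro hbdd
  obtain ⟨_, ⟨M, rfl⟩, hM⟩ :=
    exists_lt_of_lt_csSup (Set.range_nonempty T) (sub_lt_self (sSup (Set.range T)) hδ)
  obtain ⟨n, hn⟩ := hjump M
  exact (le_csSup hbdd ⟨n, rfl⟩).not_gt (by linarith)

lemma sum_le_sum_ite_le_add_card_mul {ι : Type*} (s : Finset ι) {a : ι → ℝ} {c : ℝ}
    (hc : 0 ≤ c) (ha : ∀ i ∈ s, a i ≤ 1) :
    ∑ i ∈ s, a i ≤ ∑ i ∈ s, (if c ≤ a i then 1 else 0) + #s * c :=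
  calc ∑ i ∈ s, a i ≤ ∑ i ∈ s, ((if c ≤ a i then 1 else 0) + c) :=
        sum_le_sum fun i hi => by split_ifs <;> linarith [ha i hi]
    _ = ∑ i ∈ s, (if c ≤ a i then 1 else 0) + #s * c := by
        rw [sum_add_distrib, sum_const, nsmul_eq_mul]

lemma div_le_sum_Ioc_div {b : ℕ → ℝ} (hb : ∀ i, 0 ≤ b i) (M n : ℕ) :
    (∑ i ∈ Ioc M n, b i) / n ≤ ∑ i ∈ Ioc M n, b i / i := by
  rw [sum_div]
  refine sum_le_sum fun i hi => ?_
  obtain ⟨hMi, hin⟩ := mem_Ioc.mp hi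
  exact div_le_div_of_nonneg_left (hb i) (by exact_mod_cast M.zero_le.trans_lt hMi)
    (by exact_mod_cast hin)

lemma div_le_sum_Icc_div_sub_sum_Icc_div {b : ℕ → ℝ} (hb0 : ∀ i, 0 ≤ b i) (hb1 : ∀ i, b i ≤ 1)
    {M n : ℕ} (hMn : M ≤ n) :
    (∑ i ∈ Icc 1 n, b i - M) / n ≤ ∑ i ∈ Icc 1 n, b i / i - ∑ i ∈ Icc 1 M, b i / i := by
  have hIcc : ∀ k, Icc 1 k = Ioc 0 k := Icc_add_one_left_eq_Ioc 0
  have hhead : ∑ i ∈ Ioc 0 M, b i ≤ M := by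
    simpa using sum_le_card_nsmul (Ioc 0 M) b 1 fun i _ => hb1 i
  simp only [hIcc, ← sum_Ioc_consecutive _ M.zero_le hMn, add_sub_cancel_left]
  calc (∑ i ∈ Ioc 0 M, b i + ∑ i ∈ Ioc M n, b i - M) / n
      ≤ (∑ i ∈ Ioc M n, b i) / n := by gcongr; linarith
    _ ≤ ∑ i ∈ Ioc M n, b i / i := div_le_sum_Ioc_div hb0 M n

theorem stmt2 (a : ℕ → ℝ) (ε : ℝ) (hε : 0 < ε)
    (hbound : ∀ i, a i ∈ Set.Icc (0 : ℝ) 1)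
    (hlimsup : Filter.limsup (fun n => (∑ i ∈ Finset.Icc 1 n, a i) / n) Filter.atTop = ε)
    (α : ℕ → ℝ) (hα : ∀ i, α i = if ε / 4 ≤ a i then 1 else 0) :
    Filter.Tendsto (fun N => ∑ i ∈ Finset.Icc 1 N, α i / i) Filter.atTop Filter.atTop := by
  have hα0 : ∀ i, 0 ≤ α i := fun i => by rw [hα]; split_ifs <;> norm_num
  have hα1 : ∀ i, α i ≤ 1 := fun i => by rw [hα]; split_ifs <;> norm_num
  have hfreq : ∃ᶠ n : ℕ in atTop, ε / 2 < (∑ i ∈ Icc 1 n, a i) / n :=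
    frequently_lt_of_lt_limsup (isCoboundedUnder_le_of_le atTop fun n =>
      div_nonneg (sum_nonneg fun i _ => (hbound i).1) n.cast_nonneg) (by linarith)
  refine tendsto_atTop_atTop_of_monotone'
    (fun m n hmn => sum_le_sum_of_subset_of_nonneg (Icc_subset_Icc_right hmn)
      fun i _ _ => div_nonneg (hα0 i) i.cast_nonneg)
    (not_bddAbove_range_of_forall_exists_add_le (δ := ε / 8) (by positivity) fun M => ?_)
  obtain ⟨n, havg, hMn, hεn⟩ := (hfreq.and_eventually ((eventually_ge_atTop M).and
    (tendsto_natCast_atTop_atTop.eventually_ge_atTop (8 * M / ε)))).exists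
  have hn : (0 : ℝ) < n := by
    rcases n.eq_zero_or_pos with rfl | hn
    · simp at havg; linarith
    · exact_mod_cast hn
  have hdensity : ε / 4 * n ≤ ∑ i ∈ Icc 1 n, α i := by
    have := sum_le_sum_ite_le_add_card_mul (Icc 1 n) (c := ε / 4) (by positivity)
      fun i _ => (hbound i).2
    simp only [← hα, Nat.card_Icc, add_tsub_cancel_right] at this
    rw [lt_div_iff₀ hn] at havg
    linarith
  refine ⟨n, ?_⟩
  have hblock := div_le_sum_Icc_div_sub_sum_Icc_div hα0 hα1 hMn
  have : ε / 8 ≤ (∑ i ∈ Icc 1 n, α i - M) / n := by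
    rw [le_div_iff₀ hn]
    rw [div_le_iff₀ hε] at hεn
    linarith
  linarith
end

section
/- Let γ_k = 1/(k(k+1)) (so Γ_t = 1/t). Fix t_i ≥ 1 and ε ∈ (0, 1/2). If a reward sequence satisfies r_k = 1/2 − ε for t ≤ k ≤ 2t_i and r_k ≤ 1/2 for k > 2t_i, then for any t with t_i ≤ t ≤ (3/2)t_i, the normalized discounted value (1/Γ_t)∑_{k=t}^∞ γ_k r_k is strictly less than 1/2 − ε/4. -/
/-! Since `1 / (k (k + 1)) = 1 / k - 1 / (k + 1)`, the weights telescope: their sum over `k ≥ m`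
is `1 / m`. Bounding `r k` by `1/2 - ε` for `k ≤ 2 tᵢ` and by `1/2` beyond, the normalized value
is at most `(1/2 - ε) + ε t / (2 tᵢ + 1)`, and `t / (2 tᵢ + 1) < 3/4` when `2 t ≤ 3 tᵢ`. -/

open Filter Topology Finset

noncomputable def discountWeight (n : ℕ) : ℝ := 1 / (n * (n + 1))

lemma discountWeight_nonneg (n : ℕ) : 0 ≤ discountWeight n := by
  unfold discountWeight; positivity

lemma discountWeight_eq_sub {n : ℕ} (hn : 0 < n) :
    discountWeight n = 1 / n - 1 / ((n + 1 : ℕ) : ℝ) := by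
  have : (0 : ℝ) < n := by exact_mod_cast hn
  unfold discountWeight
  push_cast
  field_simp
  ring

lemma hasSum_discountWeight_nat_add {m : ℕ} (hm : 0 < m) :
    HasSum (fun k ↦ discountWeight (m + k)) (1 / m) := by
  rw [hasSum_iff_tendsto_nat_of_nonneg (fun k ↦ discountWeight_nonneg _)]
  have partial_sum (n : ℕ) :
      ∑ k ∈ range n, discountWeight (m + k) = 1 / m - 1 / ((m + n : ℕ) : ℝ) := by
    have := sum_range_sub' (fun k ↦ 1 / ((m + k : ℕ) : ℝ)) n
    simp only [add_zero, ← add_assoc] at this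
    rw [← this]
    exact sum_congr rfl fun k _ ↦ discountWeight_eq_sub (by omega)
  simp only [partial_sum]
  have tail : Tendsto (fun n : ℕ ↦ 1 / ((m + n : ℕ) : ℝ)) atTop (𝓝 0) :=
    tendsto_one_div_atTop_nhds_zero_nat.comp <|
      (tendsto_add_atTop_nat m).congr fun n ↦ add_comm n m
  simpa using tendsto_const_nhds.sub tail

lemma hasSum_discountWeight_tail {m n : ℕ} (hm : 0 < m) (hmn : m ≤ n) :
    HasSum (fun k ↦ if n ≤ m + k then discountWeight (m + k) else 0) (1 / n) := by
  have hhead : (1 / n : ℝ) =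
      1 / n + ∑ k ∈ range (n - m), (if n ≤ m + k then discountWeight (m + k) else 0) := by
    rw [sum_eq_zero fun k hk ↦ if_neg (by simp only [mem_range] at hk; omega), add_zero]
  rw [hhead, ← hasSum_nat_add_iff]
  refine (hasSum_discountWeight_nat_add (hm.trans_le hmn)).congr_fun fun k ↦ ?_
  rw [if_pos (by omega)]
  congr 1
  omega

lemma summable_discountWeight_mul {m : ℕ} (hm : 0 < m) {r : ℕ → ℝ} {C : ℝ}
    (hr : ∀ k, |r k| ≤ C) : Summable fun k ↦ discountWeight (m + k) * r (m + k) := by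
  refine ((hasSum_discountWeight_nat_add hm).summable.mul_right C).of_norm_bounded fun k ↦ ?_
  rw [norm_mul, Real.norm_of_nonneg (discountWeight_nonneg _), Real.norm_eq_abs]
  exact mul_le_mul_of_nonneg_left (hr _) (discountWeight_nonneg _)

lemma mul_tsum_discountWeight_le {m n : ℕ} (hm : 0 < m) (hmn : m ≤ n) {r : ℕ → ℝ} {a b : ℝ}
    (hsum : Summable fun k ↦ discountWeight (m + k) * r (m + k))
    (hlow : ∀ k, m ≤ k → k < n → r k ≤ a) (hhigh : ∀ k, n ≤ k → r k ≤ b) :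
    m * ∑' k, discountWeight (m + k) * r (m + k) ≤ a + (b - a) * (m / n) := by
  have hmajorant : HasSum
      (fun k ↦ a * discountWeight (m + k) +
        (b - a) * if n ≤ m + k then discountWeight (m + k) else 0)
      (a * (1 / m) + (b - a) * (1 / n)) :=
    ((hasSum_discountWeight_nat_add hm).mul_left a).add
      ((hasSum_discountWeight_tail hm hmn).mul_left (b - a))
  have hle : ∑' k, discountWeight (m + k) * r (m + k) ≤ a * (1 / m) + (b - a) * (1 / n) := by
    refine hmajorant.tsum_eq ▸ hsum.tsum_le_tsum (fun k ↦ ?_) hmajorant.summable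
    have hγ := discountWeight_nonneg (m + k)
    split_ifs with hk
    · nlinarith [hhigh _ hk]
    · nlinarith [hlow (m + k) (by omega) (by omega)]
  have hm' : (0 : ℝ) < m := by exact_mod_cast hm
  calc (m : ℝ) * ∑' k, discountWeight (m + k) * r (m + k)
      ≤ m * (a * (1 / m) + (b - a) * (1 / n)) := by gcongr
    _ = a + (b - a) * (m / n) := by field_simp

theorem stmt8_general (ti : ℕ) (hti : 1 ≤ ti) (ε : ℝ) (hε0 : 0 < ε)
    (r : ℕ → ℝ) (hbound : ∀ k, r k ∈ Set.Icc (0 : ℝ) 1)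
    (t : ℕ) (ht1 : ti ≤ t) (ht2 : 2 * t ≤ 3 * ti)
    (hr1 : ∀ k, t ≤ k → k ≤ 2 * ti → r k = 1 / 2 - ε)
    (hr2 : ∀ k, 2 * ti < k → r k ≤ 1 / 2) :
    (t : ℝ) * ∑' k : ℕ, (1 / (((t + k : ℕ) : ℝ) * ((t + k : ℕ) + 1))) * r (t + k)
      < 1 / 2 - ε / 4 := by
  change (t : ℝ) * ∑' k, discountWeight (t + k) * r (t + k) < _
  have ht : 0 < t := by omega
  have habs (k : ℕ) : |r k| ≤ 1 := abs_le.mpr ⟨by linarith [(hbound k).1], (hbound k).2⟩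
  have hvalue := mul_tsum_discountWeight_le ht (by omega : t ≤ 2 * ti + 1)
    (summable_discountWeight_mul ht habs)
    (fun k hk hk' ↦ (hr1 k hk (by omega)).le) (fun k hk ↦ hr2 k (by omega))
  have hratio : (t : ℝ) / (2 * ti + 1 : ℕ) < 3 / 4 := by
    rw [div_lt_iff₀ (by positivity)]
    have : (2 * t : ℝ) ≤ 3 * ti := by exact_mod_cast ht2
    push_cast
    linarith
  calc _ ≤ 1 / 2 - ε + (1 / 2 - (1 / 2 - ε)) * (t / (2 * ti + 1 : ℕ)) := hvalue
    _ < 1 / 2 - ε + ε * (3 / 4) := by rw [sub_sub_cancel]; gcongr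
    _ = 1 / 2 - ε / 4 := by ring

theorem stmt8 (ti : ℕ) (hti : 1 ≤ ti) (ε : ℝ) (hε0 : 0 < ε) (hε1 : ε < 1 / 2)
    (r : ℕ → ℝ) (hbound : ∀ k, r k ∈ Set.Icc (0 : ℝ) 1)
    (t : ℕ) (ht1 : ti ≤ t) (ht2 : 2 * t ≤ 3 * ti)
    (hr1 : ∀ k, t ≤ k → k ≤ 2 * ti → r k = 1 / 2 - ε)
    (hr2 : ∀ k, 2 * ti < k → r k ≤ 1 / 2) :
    (t : ℝ) * ∑' k : ℕ, (1 / (((t + k : ℕ) : ℝ) * ((t + k : ℕ) + 1))) * r (t + k)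
      < 1 / 2 - ε / 4 :=
  stmt8_general ti hti ε hε0 r hbound t ht1 ht2 hr1 hr2
end

section
/- Approximation Lemma: Let γ be a regular discount function with tail sums Γ_t, let ε ∈ (0,1), and let h ≥ H_t(1−ε) where H_t(p) = min{h : (1/Γ_t)∑_{k=t}^{t+h} γ_k > p}. If two reward sequences (r_k), (r'_k) with values in [0,1] agree on all k ∈ [t, t+h], then |(1/Γ_t)∑_{k=t}^∞ γ_k r_k − (1/Γ_t)∑_{k=t}^∞ γ_k r'_k| < ε. -/
/-!
Since `H_t(1 - ε) ≤ h`, the weights `γ_t, …, γ_{t+h}` carry more than a `1 - ε` fraction of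
`Γ_t`, so the weights beyond `t + h` sum to less than `ε Γ_t`. The two reward sequences agree up
to `t + h` and differ by at most `1` afterwards, so their discounted sums differ by at most that
tail.
-/

open Filter Finset

/-- The effective horizon `H_t(p)`: the least `h` with `(1/Γ_t) ∑_{k=t}^{t+h} γ_k > p`,
where `Γ_t = ∑_{i≥t} γ_i`. -/
noncomputable def horizon (γ : ℕ → ℝ) (t : ℕ) (p : ℝ) : ℕ :=
  sInf {h : ℕ | p < (∑ k ∈ Finset.Icc t (t + h), γ k) / (∑' i : ℕ, γ (t + i))}

lemma sum_Icc_add_eq_sum_range (γ : ℕ → ℝ) (t n : ℕ) :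
    ∑ k ∈ Icc t (t + n), γ k = ∑ k ∈ range (n + 1), γ (t + k) := by
  rw [← Ico_add_one_right_eq_Icc, sum_Ico_eq_sum_range, show t + n + 1 - t = n + 1 by omega]

section Horizon

variable {γ : ℕ → ℝ} {t : ℕ} {p : ℝ}

lemma horizon_set_nonempty (hpos : ∀ k, 0 ≤ γ k) (hsum : Summable fun i ↦ γ (t + i))
    (hΓ : 0 < ∑' i, γ (t + i)) (hp : p < 1) :
    {h : ℕ | p < (∑ k ∈ Icc t (t + h), γ k) / ∑' i, γ (t + i)}.Nonempty := by
  have hlt : p * ∑' i, γ (t + i) < ∑' i, γ (t + i) := by nlinarith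
  obtain ⟨N, hN⟩ := (hsum.hasSum.tendsto_sum_nat.eventually (eventually_gt_nhds hlt)).exists
  refine ⟨N, ?_⟩
  rw [Set.mem_ofPred_eq, sum_Icc_add_eq_sum_range, lt_div_iff₀ hΓ]
  exact hN.trans_le <| sum_le_sum_of_subset_of_nonneg (range_subset_range.2 N.le_succ)
    fun _ _ _ ↦ hpos _

lemma lt_sum_div_of_horizon_le (hpos : ∀ k, 0 ≤ γ k) (hsum : Summable fun i ↦ γ (t + i))
    (hΓ : 0 < ∑' i, γ (t + i)) (hp : p < 1) {h : ℕ} (hh : horizon γ t p ≤ h) :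
    p < (∑ k ∈ Icc t (t + h), γ k) / ∑' i, γ (t + i) := by
  have hmem := Nat.sInf_mem (horizon_set_nonempty hpos hsum hΓ hp)
  refine hmem.trans_le (div_le_div_of_nonneg_right ?_ hΓ.le)
  exact sum_le_sum_of_subset_of_nonneg (Icc_subset_Icc le_rfl (by unfold horizon at hh; omega))
    fun _ _ _ ↦ hpos _

end Horizon

section Tail

variable {a x y : ℕ → ℝ}

lemma summable_mul_of_mem_Icc (ha : ∀ k, 0 ≤ a k) (hs : Summable a)
    (hx : ∀ k, x k ∈ Set.Icc (0 : ℝ) 1) : Summable fun k ↦ a k * x k :=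
  hs.of_norm_bounded fun k ↦ by
    rw [Real.norm_eq_abs, abs_mul, abs_of_nonneg (ha k), abs_of_nonneg (hx k).1]
    exact mul_le_of_le_one_right (ha k) (hx k).2

lemma abs_tsum_mul_sub_tsum_mul_le_tsum_nat_add (ha : ∀ k, 0 ≤ a k) (hs : Summable a)
    (hx : ∀ k, x k ∈ Set.Icc (0 : ℝ) 1) (hy : ∀ k, y k ∈ Set.Icc (0 : ℝ) 1) {n : ℕ}
    (hagree : ∀ k < n, x k = y k) :
    |∑' k, a k * x k - ∑' k, a k * y k| ≤ ∑' k, a (k + n) := by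
  set d : ℕ → ℝ := fun k ↦ a k * (x k - y k)
  have hd : Summable d := by
    simpa only [d, mul_sub] using
      (summable_mul_of_mem_Icc ha hs hx).sub (summable_mul_of_mem_Icc ha hs hy)
  have hhead : ∑ k ∈ range n, d k = 0 :=
    sum_eq_zero fun k hk ↦ by simp [d, hagree k (mem_range.1 hk)]
  have hdiff : ∑' k, a k * x k - ∑' k, a k * y k = ∑' k, d (k + n) := calc
    _ = ∑' k, d k := by
      rw [← Summable.tsum_sub (summable_mul_of_mem_Icc ha hs hx) (summable_mul_of_mem_Icc ha hs hy)]
      simp only [d, mul_sub]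
    _ = ∑' k, d (k + n) := by rw [← hd.sum_add_tsum_nat_add n, hhead, zero_add]
  rw [hdiff, ← Real.norm_eq_abs]
  refine tsum_of_norm_bounded ((summable_nat_add_iff n).2 hs).hasSum fun k ↦ ?_
  have hxy : |x (k + n) - y (k + n)| ≤ 1 := by
    obtain ⟨hx0, hx1⟩ := hx (k + n)
    obtain ⟨hy0, hy1⟩ := hy (k + n)
    rw [abs_le]; constructor <;> linarith
  rw [Real.norm_eq_abs, abs_mul, abs_of_nonneg (ha _)]
  exact mul_le_of_le_one_right (ha _) hxy

end Tail

theorem stmt10_general (γ : ℕ → ℝ) (hpos : ∀ k, 0 ≤ γ k) (hsum : Summable γ)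
    (hΓ : ∀ s, 0 < ∑' i : ℕ, γ (s + i))
    (t : ℕ) (ε : ℝ) (hε0 : 0 < ε)
    (h : ℕ) (hh : horizon γ t (1 - ε) ≤ h)
    (r r' : ℕ → ℝ)
    (hr : ∀ k, r k ∈ Set.Icc (0 : ℝ) 1) (hr' : ∀ k, r' k ∈ Set.Icc (0 : ℝ) 1)
    (hagree : ∀ k, t ≤ k → k ≤ t + h → r k = r' k) :
    |(∑' k : ℕ, γ (t + k) * r (t + k)) / (∑' i : ℕ, γ (t + i)) -
      (∑' k : ℕ, γ (t + k) * r' (t + k)) / (∑' i : ℕ, γ (t + i))| < ε := by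
  have hsumt : Summable fun i ↦ γ (t + i) := hsum.comp_injective (add_right_injective t)
  have hhead : (1 - ε) * ∑' i, γ (t + i) < ∑ k ∈ range (h + 1), γ (t + k) := by
    rw [← sum_Icc_add_eq_sum_range, ← lt_div_iff₀ (hΓ t)]
    exact lt_sum_div_of_horizon_le hpos hsumt (hΓ t) (by linarith) hh
  have hsplit := hsumt.sum_add_tsum_nat_add (h + 1)
  have hdiff := abs_tsum_mul_sub_tsum_mul_le_tsum_nat_add (fun k ↦ hpos (t + k)) hsumt
    (fun k ↦ hr (t + k)) (fun k ↦ hr' (t + k)) (n := h + 1)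
    fun k hk ↦ hagree (t + k) (by omega) (by omega)
  rw [div_sub_div_same, abs_div, abs_of_pos (hΓ t), div_lt_iff₀ (hΓ t)]
  linarith

theorem stmt10 (γ : ℕ → ℝ) (hpos : ∀ k, 0 ≤ γ k) (hsum : Summable γ)
    (hΓ : ∀ s, 0 < ∑' i : ℕ, γ (s + i))
    (t : ℕ) (ε : ℝ) (hε0 : 0 < ε) (hε1 : ε < 1)
    (h : ℕ) (hh : horizon γ t (1 - ε) ≤ h)
    (r r' : ℕ → ℝ)
    (hr : ∀ k, r k ∈ Set.Icc (0 : ℝ) 1) (hr' : ∀ k, r' k ∈ Set.Icc (0 : ℝ) 1)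
    (hagree : ∀ k, t ≤ k → k ≤ t + h → r k = r' k) :
    |(∑' k : ℕ, γ (t + k) * r (t + k)) / (∑' i : ℕ, γ (t + i)) -
      (∑' k : ℕ, γ (t + k) * r' (t + k)) / (∑' i : ℕ, γ (t + i))| < ε :=
  stmt10_general γ hpos hsum hΓ t ε hε0 h hh r r' hr hr' hagree
end

section
/- Let χ ∈ {0,1}^∞ be a random sequence with independent bits where P(χ_n = 1) = 1/n. Fix h ∈ ℕ and define dotχ^h_k = 1 iff there exists i with χ_i = 1 and i ≤ j ≤ i + ⌈log i⌉ for some j ∈ [k, k+h] (i.e. an exploration burst of length log i starting at some i intersects [k, k+h]). Then with probability 1, limsup_{n→∞} (1/n) · #{k ≤ n : dotχ^h_k = 1} = 0. -/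
open Filter Finset MeasureTheory ProbabilityTheory
open scoped Classical

/-!
Write `S m` for the number of successes `χ i = 1` with `i ≤ m`. Its mean is the harmonic number
`H_m ≤ 1 + log m`, so Markov's inequality gives `P(S (2^j) ≥ (j+1)^3) ≤ (j+1)^{-2}`, and by
Borel–Cantelli almost surely `S (2^j) < (j+1)^3` for all large `j`. As `S` is monotone, this
yields `S m = O((log m)^3)`. Every `k ≤ n` counted by the density lies in `[i - h, i + log i]`
for a success `i ≤ n + h`, so the count is `O((log n)^4) = o(n)`.
-/

open Real Topology
open scoped ENNReal

def successCount (b : ℕ → Bool) (m : ℕ) : ℕ := #{i ∈ Icc 1 m | b i = true}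

/-- The paper's `dotχ^h_k = 1`. -/
def NearBurst (b : ℕ → Bool) (h k : ℕ) : Prop :=
  ∃ j, k ≤ j ∧ j ≤ k + h ∧ ∃ i, 1 ≤ i ∧ b i = true ∧ i ≤ j ∧ (j : ℝ) ≤ i + log i

section Deterministic

variable (b : ℕ → Bool)

lemma successCount_mono : Monotone (successCount b) := fun _ _ hmn =>
  card_le_card (filter_subset_filter _ (Icc_subset_Icc_right hmn))

lemma card_nearBurst_le (h n : ℕ) :
    #{k ∈ Icc 1 n | NearBurst b h k} ≤
      successCount b (n + h) * (⌊log (n + h : ℕ)⌋₊ + h + 1) := by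
  set L := ⌊log (n + h : ℕ)⌋₊
  have hcover : {k ∈ Icc 1 n | NearBurst b h k} ⊆
      {i ∈ Icc 1 (n + h) | b i = true}.biUnion fun i => Icc (i - h) (i + L) := by
    intro k hk
    obtain ⟨hk, j, hkj, hjk, i, hi, hbi, hij, hji⟩ := mem_filter.1 hk
    have hin : i ≤ n + h := by have := (mem_Icc.1 hk).2; omega
    have hjiL : j - i ≤ L := by
      refine Nat.le_floor ?_
      calc ((j - i : ℕ) : ℝ) = j - i := Nat.cast_sub hij
        _ ≤ log i := by linarith
        _ ≤ log (n + h : ℕ) := log_le_log (by exact_mod_cast hi) (by exact_mod_cast hin)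
    exact mem_biUnion.2
      ⟨i, mem_filter.2 ⟨mem_Icc.2 ⟨hi, hin⟩, hbi⟩, mem_Icc.2 ⟨by omega, by omega⟩⟩
  calc _ ≤ _ := card_le_card hcover
    _ ≤ ∑ i ∈ {i ∈ Icc 1 (n + h) | b i = true}, #(Icc (i - h) (i + L)) := card_biUnion_le
    _ ≤ ∑ _i ∈ {i ∈ Icc 1 (n + h) | b i = true}, (L + h + 1) := by
        gcongr with i
        rw [Nat.card_Icc]
        omega
    _ = successCount b (n + h) * (L + h + 1) := by rw [sum_const, smul_eq_mul, successCount]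

variable {b}

lemma successCount_le_of_two_pow {J : ℕ}
    (hJ : ∀ j ≥ J, successCount b (2 ^ j) < (j + 1) ^ 3) {m : ℕ} (hm : 2 ^ J ≤ m) :
    (successCount b m : ℝ) ≤ 8 * (log m + 1) ^ 3 := by
  set j := Nat.log 2 m + 1
  have hJj : J ≤ j := by have := Nat.le_log_of_pow_le one_lt_two hm; omega
  have hcount : successCount b m ≤ (j + 1) ^ 3 :=
    (successCount_mono b (Nat.lt_pow_succ_log_self one_lt_two m).le).trans (hJ j hJj).le
  have hlog : (Nat.log 2 m : ℝ) ≤ 2 * log m := by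
    have hm1 : (1 : ℝ) ≤ m := by exact_mod_cast Nat.one_le_two_pow.trans hm
    calc (Nat.log 2 m : ℝ) ≤ logb 2 m := by exact_mod_cast natLog_le_logb m 2
      _ = log m / log 2 := rfl
      _ ≤ 2 * log m := by
        rw [div_le_iff₀ (log_pos one_lt_two)]
        nlinarith [log_nonneg hm1, log_two_gt_d9]
  calc (successCount b m : ℝ) ≤ ((j + 1 : ℕ) : ℝ) ^ 3 := by exact_mod_cast hcount
    _ ≤ (2 * log m + 2) ^ 3 := by
        gcongr
        push_cast [j]
        linarith
    _ = 8 * (log m + 1) ^ 3 := by ring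

lemma card_nearBurst_le_log_pow {J : ℕ}
    (hJ : ∀ j ≥ J, successCount b (2 ^ j) < (j + 1) ^ 3) (h : ℕ) {n : ℕ} (hn : 2 ^ J ≤ n) :
    (#{k ∈ Icc 1 n | NearBurst b h k} : ℝ) ≤ 8 * (h + 1) * (log (n + h) + 1) ^ 4 := by
  set a := log (n + h : ℕ)
  have ha : 0 ≤ a := log_natCast_nonneg _
  have hS := successCount_le_of_two_pow hJ (hn.trans (Nat.le_add_right n h))
  calc (#{k ∈ Icc 1 n | NearBurst b h k} : ℝ)
      ≤ successCount b (n + h) * ((⌊a⌋₊ : ℝ) + h + 1) := by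
        exact_mod_cast card_nearBurst_le b h n
    _ ≤ 8 * (a + 1) ^ 3 * (a + h + 1) := by
        gcongr
        exact Nat.floor_le ha
    _ ≤ 8 * (a + 1) ^ 3 * ((h + 1) * (a + 1)) := by
        gcongr
        nlinarith [(Nat.cast_nonneg h : (0 : ℝ) ≤ h)]
    _ = 8 * (h + 1) * (log (n + h) + 1) ^ 4 := by
        rw [show a = log (n + h) by push_cast [a]; rfl]
        ring

lemma tendsto_log_add_pow_div_atTop (c : ℝ) (k : ℕ) :
    Tendsto (fun n : ℕ => (log (n + c) + 1) ^ k / n) atTop (𝓝 0) := by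
  have hx : Tendsto (fun n : ℕ => exp 1 * (n + c)) atTop atTop :=
    (tendsto_atTop_add_const_right _ c tendsto_natCast_atTop_atTop).const_mul_atTop (exp_pos 1)
  refine ((tendsto_pow_log_div_mul_add_atTop (exp 1)⁻¹ (-c) k (by positivity)).comp hx).congr' ?_
  filter_upwards [hx.eventually_gt_atTop 0] with n hn
  have hnc : 0 < (n : ℝ) + c := pos_of_mul_pos_right hn (exp_pos 1).le
  rw [Function.comp_apply, log_mul (exp_ne_zero 1) hnc.ne', log_exp, ← mul_assoc,
    inv_mul_cancel₀ (exp_ne_zero 1)]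
  ring_nf

lemma tendsto_card_nearBurst_div
    (hb : ∀ᶠ j in atTop, successCount b (2 ^ j) < (j + 1) ^ 3) (h : ℕ) :
    Tendsto (fun n : ℕ => (#{k ∈ Icc 1 n | NearBurst b h k} : ℝ) / n) atTop (𝓝 0) := by
  obtain ⟨J, hJ⟩ := eventually_atTop.1 hb
  have hbound := (tendsto_log_add_pow_div_atTop h 4).const_mul (8 * ((h : ℝ) + 1))
  rw [mul_zero] at hbound
  refine squeeze_zero' (Eventually.of_forall fun n => by positivity) ?_ hbound
  filter_upwards [eventually_ge_atTop (2 ^ J)] with n hn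
  rw [← mul_div_assoc]
  gcongr
  exact card_nearBurst_le_log_pow hJ h hn

end Deterministic

section Probability

lemma successCount_eq_sum_indicator {Ω : Type*} (χ : ℕ → Ω → Bool) (m : ℕ) (ω : Ω) :
    (successCount (χ · ω) m : ℝ≥0∞) = ∑ i ∈ Icc 1 m, {ω | χ i ω = true}.indicator 1 ω := by
  rw [successCount, card_filter]
  push_cast
  simp [Set.indicator_apply]

variable {Ω : Type*} [MeasurableSpace Ω] {P : Measure Ω} {χ : ℕ → Ω → Bool}

lemma measurableSet_eq_true (hmeas : ∀ n, Measurable (χ n)) (i : ℕ) :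
    MeasurableSet {ω | χ i ω = true} :=
  hmeas i (measurableSet_singleton true)

lemma measurable_successCount (hmeas : ∀ n, Measurable (χ n)) (m : ℕ) :
    Measurable fun ω => (successCount (χ · ω) m : ℝ≥0∞) := by
  simp_rw [successCount_eq_sum_indicator]
  exact Finset.measurable_sum _ fun i _ =>
    measurable_const.indicator (measurableSet_eq_true hmeas i)

lemma lintegral_successCount_le (hmeas : ∀ n, Measurable (χ n))
    (hp : ∀ n : ℕ, 1 ≤ n → P {ω | χ n ω = true} = ENNReal.ofReal (1 / n)) (m : ℕ) :
    ∫⁻ ω, (successCount (χ · ω) m : ℝ≥0∞) ∂P ≤ ENNReal.ofReal (1 + log m) := by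
  simp_rw [successCount_eq_sum_indicator]
  rw [lintegral_finsetSum (f := fun i ω => {ω | χ i ω = true}.indicator 1 ω) _ fun i _ =>
    measurable_const.indicator (measurableSet_eq_true hmeas i)]
  calc ∑ i ∈ Icc 1 m, ∫⁻ ω, {ω | χ i ω = true}.indicator 1 ω ∂P
      = ∑ i ∈ Icc 1 m, ENNReal.ofReal (1 / i) := sum_congr rfl fun i hi => by
        rw [lintegral_indicator_one (measurableSet_eq_true hmeas i),
          hp i (mem_Icc.1 hi).1]
    _ = ENNReal.ofReal (harmonic m) := by
        rw [← ENNReal.ofReal_sum_of_nonneg fun _ _ => by positivity, harmonic_eq_sum_Icc]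
        push_cast
        simp [one_div]
    _ ≤ ENNReal.ofReal (1 + log m) := ENNReal.ofReal_le_ofReal (harmonic_le_one_add_log m)

lemma measure_successCount_two_pow_ge_le (hmeas : ∀ n, Measurable (χ n))
    (hp : ∀ n : ℕ, 1 ≤ n → P {ω | χ n ω = true} = ENNReal.ofReal (1 / n)) (j : ℕ) :
    P {ω | (j + 1) ^ 3 ≤ successCount (χ · ω) (2 ^ j)} ≤ ENNReal.ofReal (1 / (j + 1) ^ 2) := by
  set N := (j + 1) ^ 3
  have hN : (N : ℝ≥0∞) ≠ 0 := by positivity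
  have hmarkov := mul_meas_ge_le_lintegral (μ := P) (measurable_successCount hmeas (2 ^ j)) N
  simp only [Nat.cast_le] at hmarkov
  have hmean : ENNReal.ofReal (1 + log (2 ^ j : ℕ)) ≤ ENNReal.ofReal (j + 1) := by
    refine ENNReal.ofReal_le_ofReal ?_
    rw [Nat.cast_pow, Nat.cast_ofNat, Real.log_pow]
    nlinarith [log_two_lt_d9, (Nat.cast_nonneg j : (0 : ℝ) ≤ j)]
  calc P {ω | N ≤ successCount (χ · ω) (2 ^ j)} ≤ ENNReal.ofReal (j + 1) / N := by
        rw [ENNReal.le_div_iff_mul_le (Or.inl hN) (Or.inl (ENNReal.natCast_ne_top _)), mul_comm]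
        exact hmarkov.trans ((lintegral_successCount_le hmeas hp _).trans hmean)
    _ = ENNReal.ofReal (1 / (j + 1) ^ 2) := by
        rw [← ENNReal.ofReal_natCast, ← ENNReal.ofReal_div_of_pos (by positivity)]
        congr 1
        push_cast [N]
        field_simp

lemma ae_eventually_successCount_two_pow_lt (hmeas : ∀ n, Measurable (χ n))
    (hp : ∀ n : ℕ, 1 ≤ n → P {ω | χ n ω = true} = ENNReal.ofReal (1 / n)) :
    ∀ᵐ ω ∂P, ∀ᶠ j in atTop, successCount (χ · ω) (2 ^ j) < (j + 1) ^ 3 := by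
  have hsum : Summable fun j : ℕ => 1 / ((j : ℝ) + 1) ^ 2 := by
    simpa using (summable_nat_add_iff 1).2 (Real.summable_one_div_nat_pow.2 one_lt_two)
  have hfin : ∑' j : ℕ, P {ω | (j + 1) ^ 3 ≤ successCount (χ · ω) (2 ^ j)} ≠ ∞ := by
    refine ne_top_of_le_ne_top ?_
      (ENNReal.tsum_le_tsum (measure_successCount_two_pow_ge_le hmeas hp))
    rw [← ENNReal.ofReal_tsum_of_nonneg (fun _ => by positivity) hsum]
    exact ENNReal.ofReal_ne_top
  filter_upwards [ae_eventually_notMem hfin] with ω hω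
  filter_upwards [hω] with j hj
  exact not_le.1 hj

end Probability

theorem stmt12_general {Ω : Type*} [MeasurableSpace Ω] (P : Measure Ω)
    (χ : ℕ → Ω → Bool) (hmeas : ∀ n, Measurable (χ n))
    (hp : ∀ n : ℕ, 1 ≤ n → P {ω | χ n ω = true} = ENNReal.ofReal (1 / n))
    (h : ℕ) :
    ∀ᵐ ω ∂P,
      Filter.limsup (fun n : ℕ =>
        (((Finset.Icc 1 n).filter (fun k =>
          ∃ j, k ≤ j ∧ j ≤ k + h ∧ ∃ i, 1 ≤ i ∧ χ i ω = true ∧ i ≤ j ∧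
            (j : ℝ) ≤ i + Real.log i)).card : ℝ) / n) Filter.atTop = 0 := by
  filter_upwards [ae_eventually_successCount_two_pow_lt hmeas hp] with ω hω
  exact (tendsto_card_nearBurst_div hω h).limsup_eq

theorem stmt12 {Ω : Type*} [MeasurableSpace Ω] (P : Measure Ω) [IsProbabilityMeasure P]
    (χ : ℕ → Ω → Bool) (hmeas : ∀ n, Measurable (χ n))
    (hindep : iIndepFun χ P)
    (hp : ∀ n : ℕ, 1 ≤ n → P {ω | χ n ω = true} = ENNReal.ofReal (1 / n))
    (h : ℕ) :
    ∀ᵐ ω ∂P,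
      Filter.limsup (fun n : ℕ =>
        (((Finset.Icc 1 n).filter (fun k =>
          ∃ j, k ≤ j ∧ j ≤ k + h ∧ ∃ i, 1 ≤ i ∧ χ i ω = true ∧ i ≤ j ∧
            (j : ℝ) ≤ i + Real.log i)).card : ℝ) / n) Filter.atTop = 0 :=
  stmt12_general P χ hmeas hp h
end
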